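/- arXiv:1604.03910 — 6 statements merged into one kernel-verified Lean document; each statement's English description precedes it below -/
import Mathlib

section
/- For real numbers α, β, μ, ν > 0, we have ∫_0^∞ x^{μ-1} e^{-βx} γ(ν, αx) dx = (α^ν Γ(μ+ν)) / (ν (α+β)^{μ+ν}) · ₂F₁(1, μ+ν; ν+1; α/(α+β)), where γ(ν, z) is the lower incomplete gamma function. -/
open MeasureTheory Set

/-- The Gauss hypergeometric function `₂F₁(a,b;c;x)`. -/
noncomputable def gaussHypergeom (a b c x : ℝ) : ℝ :=
  ∑' k : ℕ, (ascPochhammer ℝ k).eval a * (ascPochhammer ℝ k).eval b /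
      (ascPochhammer ℝ k).eval c * x ^ k / (Nat.factorial k)

/-- The lower incomplete gamma function `γ(ν, z) = ∫_0^z t^(ν-1) e^(-t) dt`. -/
noncomputable def lowerIncGamma (ν z : ℝ) : ℝ :=
  ∫ t in (0:ℝ)..z, t ^ (ν - 1) * Real.exp (-t)

lemma ascPochhammer_eval_prod (x : ℝ) (n : ℕ) :
    (ascPochhammer ℝ n).eval x = ∏ j ∈ Finset.range n, (x + j) := by
  induction n with
  | zero => simp
  | succ n ih => rw [ascPochhammer_succ_eval, ih, Finset.prod_range_succ]

lemma my_prod_pos {x : ℝ} (hx : 0 < x) (n : ℕ) :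
    0 < ∏ j ∈ Finset.range n, (x + (j:ℝ)) :=
  Finset.prod_pos fun j _ => by positivity

lemma my_Gamma_add_nat {s : ℝ} (hs : 0 < s) (n : ℕ) :
    Real.Gamma (s + n) = Real.Gamma s * ∏ j ∈ Finset.range n, (s + j) := by
  induction n with
  | zero => simp
  | succ n ih =>
    have h1 : s + ((n:ℝ)+1) = (s + n) + 1 := by ring
    have h2 : (0:ℝ) < s + n := by positivity
    push_cast
    rw [h1, Real.Gamma_add_one h2.ne', ih, Finset.prod_range_succ]
    push_cast
    ring

lemma my_beta01 {ν : ℝ} (hν : 0 < ν) (k : ℕ) :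
    ∫ s in (0:ℝ)..1, s ^ (ν - 1) * (1 - s) ^ k
      = (Nat.factorial k : ℝ) / ∏ j ∈ Finset.range (k+1), (ν + j) := by
  have hβ := Complex.betaIntegral_eval_nat_add_one_right (u := (ν:ℂ)) (by simpa using hν) k
  rw [Complex.betaIntegral] at hβ
  have h1 : ∀ s ∈ Set.uIcc (0:ℝ) 1,
      ((s:ℂ) ^ ((ν:ℂ) - 1) * (1 - (s:ℂ)) ^ ((k:ℂ) + 1 - 1))
        = ((s ^ (ν - 1) * (1 - s) ^ k : ℝ) : ℂ) := by
    intro s hs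
    rw [Set.uIcc_of_le zero_le_one] at hs
    have h2 : ((k:ℂ) + 1 - 1) = ((k:ℕ) : ℂ) := by ring
    rw [h2, Complex.cpow_natCast, show ((ν:ℂ)-1) = (((ν-1:ℝ)):ℂ) by push_cast; ring,
      ← Complex.ofReal_cpow hs.1]
    push_cast
    ring
  rw [intervalIntegral.integral_congr h1, intervalIntegral.integral_ofReal] at hβ
  have h3 : ((Nat.factorial k : ℂ)) / ∏ j ∈ Finset.range (k+1), ((ν:ℂ) + j)
      = (((Nat.factorial k : ℝ) / ∏ j ∈ Finset.range (k+1), (ν + j) : ℝ) : ℂ) := by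
    push_cast
    ring
  rw [h3] at hβ
  exact_mod_cast hβ

lemma my_beta_scaled {ν z : ℝ} (hν : 0 < ν) (hz : 0 < z) (k : ℕ) :
    ∫ t in (0:ℝ)..z, t ^ (ν - 1) * (z - t) ^ k
      = z ^ (ν + k) * (Nat.factorial k : ℝ) / ∏ j ∈ Finset.range (k+1), (ν + j) := by
  have h := intervalIntegral.smul_integral_comp_mul_left
      (f := fun t => t ^ (ν - 1) * (z - t) ^ k) (a := (0:ℝ)) (b := 1) z
  rw [mul_zero, mul_one] at h
  rw [← h]
  have h2 : ∀ s ∈ Set.uIcc (0:ℝ) 1, (z*s) ^ (ν-1) * (z - z*s) ^ k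
      = (z ^ (ν-1) * z^k) * (s ^ (ν-1) * (1-s)^k) := by
    intro s hs
    rw [Set.uIcc_of_le zero_le_one] at hs
    rw [Real.mul_rpow hz.le hs.1, show z - z*s = z * (1-s) by ring, mul_pow]
    ring
  rw [intervalIntegral.integral_congr h2, intervalIntegral.integral_const_mul, my_beta01 hν k,
    smul_eq_mul, show ν + (k:ℝ) = 1 + (ν-1) + k by ring, Real.rpow_add hz, Real.rpow_add hz,
    Real.rpow_one, Real.rpow_natCast]
  ring

lemma my_integrableOn {a r : ℝ} (ha : 0 < a) (hr : 0 < r) :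
    IntegrableOn (fun x : ℝ => x ^ (a - 1) * Real.exp (-(r * x))) (Set.Ioi 0) := by
  have h1 : IntegrableOn (fun y : ℝ => Real.exp (-y) * y ^ (a-1)) (Set.Ioi 0) :=
    Real.GammaIntegral_convergent ha
  have h2 : IntegrableOn (fun x : ℝ => Real.exp (-(r*x)) * (r*x) ^ (a-1)) (Set.Ioi 0) := by
    have := (integrableOn_Ioi_comp_mul_left_iff
      (fun y : ℝ => Real.exp (-y) * y ^ (a-1)) 0 hr).2
    rw [mul_zero] at this; exact this h1
  have h3 := h2.const_mul ((r:ℝ) ^ (a-1))⁻¹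
  apply (integrableOn_congr_fun ?_ measurableSet_Ioi).mp h3
  intro x hx
  simp only
  rw [Real.mul_rpow hr.le (le_of_lt hx)]
  have : (r:ℝ) ^ (a-1) ≠ 0 := by positivity
  field_simp

lemma my_prod_ge {ν : ℝ} (hν : 0 < ν) (k : ℕ) :
    ν * (Nat.factorial k : ℝ) ≤ ∏ j ∈ Finset.range (k+1), (ν + j) := by
  induction k with
  | zero => simp
  | succ k ih =>
    rw [Finset.prod_range_succ]
    have h1 : (0:ℝ) < ν * (Nat.factorial k : ℝ) := by positivity
    have h2 : ((k:ℝ) + 1) ≤ ν + (k+1 : ℕ) := by push_cast; linarith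
    calc ν * (Nat.factorial (k+1) : ℝ) = (ν * (Nat.factorial k : ℝ)) * ((k:ℝ)+1) := by
          push_cast [Nat.factorial_succ]; ring
      _ ≤ (∏ j ∈ Finset.range (k+1), (ν + j)) * (ν + (k+1 : ℕ)) := by
          apply mul_le_mul ih h2 (by positivity) (le_of_lt ((my_prod_pos hν _)))

lemma lowerIncGamma_series {ν z : ℝ} (hν : 0 < ν) (hz : 0 < z) :
    lowerIncGamma ν z
      = ∑' k : ℕ, z ^ (ν + k) * Real.exp (-z) / ∏ j ∈ Finset.range (k+1), (ν + j) := by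
  set F : ℕ → ℝ → ℝ := fun k t =>
    Real.exp (-z) / (Nat.factorial k : ℝ) * (t ^ (ν - 1) * (z - t) ^ k) with hF
  -- pointwise expansion on Ioc 0 z
  have key : ∀ t ∈ Set.Ioc (0:ℝ) z, t ^ (ν - 1) * Real.exp (-t) = ∑' k, F k t := by
    intro t ht
    have he : Real.exp (-t) = Real.exp (-z) * Real.exp (z - t) := by
      rw [← Real.exp_add]; ring_nf
    have hexp : Real.exp (z - t) = ∑' k : ℕ, (z - t) ^ k / (Nat.factorial k : ℝ) := by
      rw [Real.exp_eq_exp_ℝ, NormedSpace.exp_eq_tsum_div]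
    rw [he, hexp, ← tsum_mul_left, ← tsum_mul_left]
    exact tsum_congr fun k => by rw [hF]; ring
  -- interval integrability of each term
  have hInt : ∀ k : ℕ, IntervalIntegrable (F k) volume 0 z := by
    intro k
    apply IntervalIntegrable.const_mul
    exact (intervalIntegral.intervalIntegrable_rpow' (by linarith)).mul_continuousOn
      (Continuous.continuousOn (by continuity))
  -- value of each term integral
  have hval : ∀ k : ℕ, ∫ t in Set.Ioc (0:ℝ) z, F k t
      = z ^ (ν + k) * Real.exp (-z) / ∏ j ∈ Finset.range (k+1), (ν + j) := by
    intro k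
    rw [← intervalIntegral.integral_of_le hz.le, hF]
    simp only
    rw [intervalIntegral.integral_const_mul, my_beta_scaled hν hz k]
    have h1 : (Nat.factorial k : ℝ) ≠ 0 := by positivity
    field_simp
  have hnonneg : ∀ k : ℕ, ∀ t ∈ Set.Ioc (0:ℝ) z, 0 ≤ F k t := by
    intro k t ht
    have h1 : (0:ℝ) ≤ t := ht.1.le
    have h2 : (0:ℝ) ≤ z - t := by linarith [ht.2]
    rw [hF]
    positivity
  have hnorm : ∀ k : ℕ, ∫ t in Set.Ioc (0:ℝ) z, ‖F k t‖
      = z ^ (ν + k) * Real.exp (-z) / ∏ j ∈ Finset.range (k+1), (ν + j) := by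
    intro k
    rw [← hval k]
    exact setIntegral_congr_fun measurableSet_Ioc fun t ht =>
      Real.norm_of_nonneg (hnonneg k t ht)
  -- summability of the term values
  have hsum : Summable (fun k : ℕ =>
      z ^ (ν + k) * Real.exp (-z) / ∏ j ∈ Finset.range (k+1), (ν + j)) := by
    have hS : Summable (fun k : ℕ => (z ^ ν * Real.exp (-z) / ν) * (z ^ k / (Nat.factorial k : ℝ))) :=
      (Real.summable_pow_div_factorial z).mul_left _
    refine Summable.of_nonneg_of_le (fun k => by positivity) (fun k => ?_) hS
    have hP := my_prod_pos hν (k+1)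
    have hPge := my_prod_ge hν k
    have hnum : (0:ℝ) ≤ z ^ (ν + k) * Real.exp (-z) := by positivity
    calc z ^ (ν + k) * Real.exp (-z) / ∏ j ∈ Finset.range (k+1), (ν + j)
        ≤ z ^ (ν + k) * Real.exp (-z) / (ν * (Nat.factorial k : ℝ)) := by
          apply div_le_div_of_nonneg_left hnum (by positivity) hPge
      _ = (z ^ ν * Real.exp (-z) / ν) * (z ^ k / (Nat.factorial k : ℝ)) := by
          rw [Real.rpow_add hz, Real.rpow_natCast]
          ring
  -- swap integral and sum
  rw [lowerIncGamma, intervalIntegral.integral_of_le hz.le,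
    setIntegral_congr_fun measurableSet_Ioc key,
    ← MeasureTheory.integral_tsum_of_summable_integral_norm
      (fun k => (intervalIntegrable_iff_integrableOn_Ioc_of_le hz.le).mp (hInt k))
      (by simpa only [hnorm] using hsum)]
  exact tsum_congr hval

/-- `∫_0^∞ x^(μ-1) e^(-βx) γ(ν, αx) dx
    = α^ν Γ(μ+ν) / (ν (α+β)^(μ+ν)) · ₂F₁(1, μ+ν; ν+1; α/(α+β))`. -/
theorem integral_lowerIncGamma (α β μ ν : ℝ) (hα : 0 < α) (hβ : 0 < β) (hμ : 0 < μ)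
    (hν : 0 < ν) :
    (∫ x in Set.Ioi (0:ℝ), x ^ (μ - 1) * Real.exp (-β * x) * lowerIncGamma ν (α * x)) =
      α ^ ν * Real.Gamma (μ + ν) / (ν * (α + β) ^ (μ + ν)) *
        gaussHypergeom 1 (μ + ν) (ν + 1) (α / (α + β)) := by
  have hαβ : (0:ℝ) < α + β := by linarith
  set P : ℕ → ℝ := fun k => ∏ j ∈ Finset.range (k+1), (ν + (j:ℝ)) with hP
  have hPpos : ∀ k, 0 < P k := fun k => my_prod_pos hν (k+1)
  set G : ℕ → ℝ → ℝ := fun k x =>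
    (α ^ (ν + (k:ℝ)) / P k) * (x ^ (μ + ν + (k:ℝ) - 1) * Real.exp (-((α+β) * x))) with hG
  set b : ℕ → ℝ := fun k =>
    (α ^ (ν + (k:ℝ)) / P k) * ((1/(α+β)) ^ (μ + ν + (k:ℝ)) * Real.Gamma (μ + ν + (k:ℝ))) with hb
  -- Step 1: pointwise series expansion of the integrand
  have step1 : ∀ x ∈ Set.Ioi (0:ℝ),
      x ^ (μ - 1) * Real.exp (-β * x) * lowerIncGamma ν (α * x) = ∑' k, G k x := by
    intro x hx
    have hx0 : (0:ℝ) < x := hx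
    rw [lowerIncGamma_series hν (mul_pos hα hx0), ← tsum_mul_left]
    refine tsum_congr fun k => ?_
    have h1 : (α * x) ^ (ν + (k:ℝ)) = α ^ (ν + (k:ℝ)) * x ^ (ν + (k:ℝ)) :=
      Real.mul_rpow hα.le hx0.le
    have h2 : x ^ (μ - 1) * x ^ (ν + (k:ℝ)) = x ^ (μ + ν + (k:ℝ) - 1) := by
      rw [← Real.rpow_add hx0]; ring_nf
    have h3 : Real.exp (-β * x) * Real.exp (-(α * x)) = Real.exp (-((α+β) * x)) := by
      rw [← Real.exp_add]; ring_nf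
    rw [hG]
    simp only
    rw [h1]
    calc x ^ (μ - 1) * Real.exp (-β * x) *
          (α ^ (ν + (k:ℝ)) * x ^ (ν + (k:ℝ)) * Real.exp (-(α * x)) / P k)
        = (α ^ (ν + (k:ℝ)) / P k) * ((x ^ (μ - 1) * x ^ (ν + (k:ℝ))) *
            (Real.exp (-β * x) * Real.exp (-(α * x)))) := by ring
      _ = _ := by rw [h2, h3]
  -- Step 2: integrability and values
  have hGint : ∀ k : ℕ, IntegrableOn (G k) (Set.Ioi (0:ℝ)) := by
    intro k
    exact (my_integrableOn (by positivity : (0:ℝ) < μ + ν + (k:ℝ)) hαβ).const_mul _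
  have hval : ∀ k : ℕ, ∫ x in Set.Ioi (0:ℝ), G k x = b k := by
    intro k
    rw [hG, hb]
    simp only
    rw [MeasureTheory.integral_const_mul,
      Real.integral_rpow_mul_exp_neg_mul_Ioi (by positivity : (0:ℝ) < μ + ν + (k:ℝ)) hαβ]
  have hnorm : ∀ k : ℕ, ∫ x in Set.Ioi (0:ℝ), ‖G k x‖ = b k := by
    intro k
    rw [← hval k]
    refine setIntegral_congr_fun measurableSet_Ioi fun x hx => Real.norm_of_nonneg ?_
    have hx0 : (0:ℝ) < x := hx
    have := (hPpos k).le
    rw [hG]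
    positivity
  -- Step 3: summability of b via the ratio test
  have hbpos : ∀ k, 0 < b k := by
    intro k
    have h1 := hPpos k
    have h2 := Real.Gamma_pos_of_pos (by positivity : (0:ℝ) < μ + ν + (k:ℝ))
    rw [hb]
    positivity
  have hbsum : Summable b := by
    have hlt : α / (α + β) < 1 := (div_lt_one hαβ).2 (by linarith)
    apply summable_of_ratio_test_tendsto_lt_one hlt
      (Filter.Eventually.of_forall fun k => (hbpos k).ne')
    have hratio : ∀ k : ℕ, ‖b (k+1)‖ / ‖b k‖
        = (α / (α+β)) * ((μ + ν + (k:ℝ)) / (ν + (k:ℝ) + 1)) := by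
      intro k
      rw [Real.norm_of_nonneg (hbpos (k+1)).le, Real.norm_of_nonneg (hbpos k).le, hb]
      simp only
      have e1 : α ^ (ν + ((k:ℝ)+1)) = α ^ (ν + (k:ℝ)) * α := by
        rw [show ν + ((k:ℝ)+1) = (ν + (k:ℝ)) + 1 by ring, Real.rpow_add hα, Real.rpow_one]
      have e2 : (1/(α+β)) ^ (μ + ν + ((k:ℝ)+1)) = (1/(α+β)) ^ (μ + ν + (k:ℝ)) * (1/(α+β)) := by
        rw [show μ + ν + ((k:ℝ)+1) = (μ + ν + (k:ℝ)) + 1 by ring,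
          Real.rpow_add (by positivity), Real.rpow_one]
      have e3 : Real.Gamma (μ + ν + ((k:ℝ)+1)) = (μ + ν + (k:ℝ)) * Real.Gamma (μ + ν + (k:ℝ)) := by
        rw [show μ + ν + ((k:ℝ)+1) = (μ + ν + (k:ℝ)) + 1 by ring,
          Real.Gamma_add_one (by positivity : (0:ℝ) < μ + ν + (k:ℝ)).ne']
      have e4 : P (k+1) = P k * (ν + ((k:ℝ)+1)) := by
        rw [hP]; simp only
        rw [Finset.prod_range_succ]
        push_cast
        ring
      have hPk := hPpos k
      have hG1 := Real.Gamma_pos_of_pos (by positivity : (0:ℝ) < μ + ν + (k:ℝ))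
      have hA : α ^ (ν + (k:ℝ)) ≠ 0 := by positivity
      have hB : (1/(α+β)) ^ (μ + ν + (k:ℝ)) ≠ 0 := by positivity
      push_cast [e1, e2, e3, e4]
      field_simp
      ring
    have hlim1 : Filter.Tendsto (fun k : ℕ => (μ + ν + (k:ℝ)) / (ν + (k:ℝ) + 1))
        Filter.atTop (nhds 1) := by
      have h5 : Filter.Tendsto (fun k : ℕ => (μ - 1) / (ν + (k:ℝ) + 1)) Filter.atTop (nhds 0) := by
        apply Filter.Tendsto.div_atTop tendsto_const_nhds
        apply Filter.tendsto_atTop_add_const_right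
        exact Filter.tendsto_atTop_add_const_left _ _ tendsto_natCast_atTop_atTop
      have h6 : ∀ k : ℕ, (μ + ν + (k:ℝ)) / (ν + (k:ℝ) + 1) = 1 + (μ - 1) / (ν + (k:ℝ) + 1) := by
        intro k
        have : (ν + (k:ℝ) + 1) ≠ 0 := by positivity
        field_simp
        ring
      have := Filter.Tendsto.congr (fun k => (h6 k).symm) (tendsto_const_nhds.add h5)
      simpa using this
    have hlim : Filter.Tendsto (fun k : ℕ => ‖b (k+1)‖ / ‖b k‖)
        Filter.atTop (nhds (α / (α+β))) := by
      rw [show α / (α+β) = α / (α+β) * 1 by ring]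
      exact Filter.Tendsto.congr (fun k => (hratio k).symm)
        (Filter.Tendsto.const_mul _ hlim1)
    exact hlim
  -- Step 4: put everything together
  rw [setIntegral_congr_fun measurableSet_Ioi step1,
    ← MeasureTheory.integral_tsum_of_summable_integral_norm hGint
      (by simpa only [hnorm] using hbsum)]
  rw [tsum_congr hval]
  -- Step 5: identify the sum with the hypergeometric series
  rw [gaussHypergeom, ← tsum_mul_left]
  refine tsum_congr fun k => ?_
  rw [hb]
  simp only [ascPochhammer_eval_one]
  rw [ascPochhammer_eval_prod, ascPochhammer_eval_prod]
  have e1 : α ^ (ν + (k:ℝ)) = α ^ ν * α ^ k := by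
    rw [Real.rpow_add hα, Real.rpow_natCast]
  have e2 : (1/(α+β)) ^ (μ + ν + (k:ℝ)) = (1/(α+β)) ^ (μ+ν) * (1/(α+β)) ^ k := by
    rw [Real.rpow_add (by positivity), Real.rpow_natCast]
  have e3 : Real.Gamma (μ + ν + (k:ℝ)) = Real.Gamma (μ+ν) * ∏ j ∈ Finset.range k, (μ + ν + j) :=
    my_Gamma_add_nat (by positivity) k
  have e4 : P k = ν * ∏ j ∈ Finset.range k, (ν + 1 + (j:ℝ)) := by
    rw [hP]; simp only
    rw [Finset.prod_range_succ']
    push_cast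
    have hcongr : (∏ x ∈ Finset.range k, (ν + ((x:ℝ) + 1)))
        = ∏ j ∈ Finset.range k, (ν + 1 + (j:ℝ)) :=
      Finset.prod_congr rfl fun j _ => by ring
    rw [hcongr]
    ring
  have e5 : (1/(α+β)) ^ (μ+ν) = 1 / (α+β) ^ (μ+ν) := by
    rw [one_div, Real.inv_rpow hαβ.le, one_div]
  have e6 : (α / (α+β)) ^ k = α ^ k * (1/(α+β)) ^ k := by
    rw [← mul_pow]; congr 1; field_simp
  have hB2 : (0:ℝ) < ∏ j ∈ Finset.range k, (ν + 1 + (j:ℝ)) := by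
    have := my_prod_pos (by positivity : (0:ℝ) < ν + 1) k
    simpa using this
  have hfac : (Nat.factorial k : ℝ) ≠ 0 := by positivity
  have hpow : ((α+β) : ℝ) ^ (μ+ν) ≠ 0 := by positivity
  rw [e1, e2, e3, e4, e5, e6]
  field_simp
end

section
/- For real numbers b, c with c > 1 and b - c + 1 > 0, and 0 < x < 1, the Gauss hypergeometric function satisfies ₂F₁(1, b; c; x) = (c-1) (1-x)^{c-b-1} x^{1-c} B(c-1, b-c+1, x), where B is the incomplete beta function. -/
open Filter Topology Set MeasureTheory

theorem summable_mul_pow_of_tendsto_norm_div_norm {𝕜 : Type*} [NormedField 𝕜] [CompleteSpace 𝕜]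
    {a : ℕ → 𝕜} (ha : ∀ᶠ n in atTop, a n ≠ 0)
    (hratio : Tendsto (fun n => ‖a (n + 1)‖ / ‖a n‖) atTop (𝓝 1)) {y : 𝕜} (hy : ‖y‖ < 1) :
    Summable fun n => a n * y ^ n := by
  rcases eq_or_ne y 0 with rfl | hy0
  · exact summable_of_ne_finset_zero (s := {0}) fun n hn => by simp_all
  refine summable_of_ratio_test_tendsto_lt_one hy
    (ha.mono fun n hn => mul_ne_zero hn (pow_ne_zero n hy0)) ?_
  have hy' : ‖y‖ ≠ 0 := norm_ne_zero_iff.2 hy0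
  rw [← one_mul ‖y‖]
  refine (hratio.mul_const ‖y‖).congr fun n => ?_
  rw [norm_mul, norm_mul, norm_pow, norm_pow, mul_div_mul_comm, pow_succ,
    mul_div_cancel_left₀ _ (pow_ne_zero n hy')]

theorem hasDerivAt_tsum_mul_pow {𝕜 : Type*} [RCLike 𝕜] {a : ℕ → 𝕜} {r : ℝ} {t : 𝕜}
    (hsum : Summable fun n : ℕ => n * ‖a n‖ * r ^ n) (ht : ‖t‖ < r) :
    HasDerivAt (fun z => ∑' n, a n * z ^ n) (∑' n, a n * (n * t ^ (n - 1))) t := by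
  have hr : 0 < r := (norm_nonneg t).trans_lt ht
  have hbound : Summable fun n : ℕ => ‖a n‖ * (n * r ^ (n - 1)) := by
    refine (hsum.div_const r).congr fun n => ?_
    rcases n with _ | n
    · simp
    · rw [Nat.add_sub_cancel, pow_succ]
      field_simp
  refine hasDerivAt_tsum_of_isPreconnected hbound Metric.isOpen_ball
    (convex_ball 0 r).isPreconnected (fun n z _ => (hasDerivAt_pow n z).const_mul (a n))
    (fun n z hz => ?_) (Metric.mem_ball_self hr) ?_ (mem_ball_zero_iff.2 ht)
  · rw [mem_ball_zero_iff] at hz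
    rw [norm_mul, norm_mul, norm_pow, RCLike.norm_natCast]
    gcongr
  · exact summable_of_ne_finset_zero (s := {0}) fun n hn => by simp_all

theorem hasDerivAt_rpow_mul_one_sub_rpow_mul {f : ℝ → ℝ} {f' p q t : ℝ} (ht0 : 0 < t)
    (ht1 : t < 1) (hf : HasDerivAt f f' t) :
    HasDerivAt (fun s => s ^ p * (1 - s) ^ q * f s)
      (t ^ (p - 1) * (1 - t) ^ (q - 1) * (t * (1 - t) * f' + (p - (p + q) * t) * f t)) t := by
  have h1t : 0 < 1 - t := by linarith
  have hpow : HasDerivAt (fun s : ℝ => s ^ p) (p * t ^ (p - 1)) t :=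
    Real.hasDerivAt_rpow_const (Or.inl ht0.ne')
  have hpow' : HasDerivAt (fun s : ℝ => (1 - s) ^ q) (-1 * q * (1 - t) ^ (q - 1)) t :=
    ((hasDerivAt_id t).const_sub 1).rpow_const (Or.inl h1t.ne')
  refine ((hpow.mul hpow').mul hf).congr_deriv ?_
  simp only [Pi.mul_apply]
  rw [show t ^ p = t ^ (p - 1) * t by rw [← Real.rpow_add_one ht0.ne', sub_add_cancel],
    show (1 - t) ^ q = (1 - t) ^ (q - 1) * (1 - t) by
      rw [← Real.rpow_add_one h1t.ne', sub_add_cancel]]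
  ring

theorem mul_integral_rpow_mul_one_sub_rpow_of_ode {f : ℝ → ℝ} {p q x : ℝ} (hp : 0 < p)
    (hx0 : 0 ≤ x) (hx1 : x < 1) (hf : ∀ t ∈ Icc 0 x, DifferentiableAt ℝ f t)
    (hode : ∀ t ∈ Ioo 0 x, t * (1 - t) * deriv f t + (p - (p + q) * t) * f t = p) :
    p * ∫ t in 0..x, t ^ (p - 1) * (1 - t) ^ (q - 1) = x ^ p * (1 - x) ^ q * f x := by
  have hcont : ContinuousOn (fun s => s ^ p * (1 - s) ^ q * f s) (Icc 0 x) := fun t ht =>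
    have h1t : (0 : ℝ) < 1 - t := by linarith [ht.2]
    (((Real.continuousAt_rpow_const t p (Or.inr hp.le)).mul
      ((continuous_const.sub continuous_id).continuousAt.rpow_const (Or.inl h1t.ne'))).mul
      (hf t ht).continuousAt).continuousWithinAt
  have hderiv : ∀ t ∈ Ioo 0 x,
      HasDerivAt (fun s => s ^ p * (1 - s) ^ q * f s)
        (p * (t ^ (p - 1) * (1 - t) ^ (q - 1))) t := by
    intro t ht
    convert hasDerivAt_rpow_mul_one_sub_rpow_mul ht.1 (by linarith [ht.2])
      (hf t (Ioo_subset_Icc_self ht)).hasDerivAt using 1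
    rw [hode t ht]
    ring
  have hintegrable :
      IntervalIntegrable (fun t => p * (t ^ (p - 1) * (1 - t) ^ (q - 1))) volume 0 x := by
    refine intervalIntegral.intervalIntegrable_deriv_of_nonneg (by rwa [uIcc_of_le hx0])
      (by simpa [hx0] using hderiv) fun t ht => ?_
    obtain ⟨ht0, htx⟩ : 0 < t ∧ t < x := by simpa [hx0] using ht
    exact mul_nonneg hp.le (mul_nonneg (Real.rpow_nonneg ht0.le _)
      (Real.rpow_nonneg (by linarith) _))
  rw [← intervalIntegral.integral_const_mul,
    intervalIntegral.integral_eq_sub_of_hasDerivAt_of_le hx0 hcont hderiv hintegrable,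
    Real.zero_rpow hp.ne']
  ring

noncomputable def pochhammerRatio (b c : ℝ) (n : ℕ) : ℝ :=
  (ascPochhammer ℝ n).eval b / (ascPochhammer ℝ n).eval c

theorem pochhammerRatio_zero (b c : ℝ) : pochhammerRatio b c 0 = 1 := by
  simp [pochhammerRatio]

theorem pochhammerRatio_succ (b c : ℝ) (n : ℕ) :
    pochhammerRatio b c (n + 1) = (b + n) / (c + n) * pochhammerRatio b c n := by
  rw [pochhammerRatio, pochhammerRatio, ascPochhammer_succ_eval, ascPochhammer_succ_eval,
    mul_div_mul_comm, mul_comm]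

theorem pochhammerRatio_pos {b c : ℝ} (hb : 0 < b) (hc : 0 < c) (n : ℕ) :
    0 < pochhammerRatio b c n :=
  div_pos (ascPochhammer_pos n b hb) (ascPochhammer_pos n c hc)

theorem gaussHypergeom_one_eq_tsum (b c : ℝ) :
    gaussHypergeom 1 b c = fun x => ∑' n, pochhammerRatio b c n * x ^ n := by
  ext x
  refine tsum_congr fun n => ?_
  rw [ascPochhammer_eval_one, pochhammerRatio]
  field_simp [(Nat.factorial_pos n).ne']

theorem tendsto_norm_pochhammerRatio_succ_div {b c : ℝ} (hb : 0 < b) (hc : 0 < c) :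
    Tendsto (fun n => ‖pochhammerRatio b c (n + 1)‖ / ‖pochhammerRatio b c n‖) atTop (𝓝 1) := by
  have hlim : Tendsto (fun n : ℕ => (b + n) / (c + n)) atTop (𝓝 1) := by
    simpa using tendsto_add_mul_div_add_mul_atTop_nhds b c (1 : ℝ) one_ne_zero
  refine hlim.congr fun n => ?_
  rw [pochhammerRatio_succ, norm_mul, mul_div_cancel_right₀ _ (norm_ne_zero_iff.2
    (pochhammerRatio_pos hb hc n).ne'), Real.norm_of_nonneg (by positivity)]

theorem summable_pochhammerRatio_mul_pow {b c y : ℝ} (hb : 0 < b) (hc : 0 < c) (hy : |y| < 1) :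
    Summable fun n => pochhammerRatio b c n * y ^ n :=
  summable_mul_pow_of_tendsto_norm_div_norm
    (.of_forall fun n => (pochhammerRatio_pos hb hc n).ne')
    (tendsto_norm_pochhammerRatio_succ_div hb hc) hy

theorem summable_natCast_mul_pochhammerRatio_mul_pow {b c y : ℝ} (hb : 0 < b) (hc : 0 < c)
    (hy : |y| < 1) : Summable fun n : ℕ => n * pochhammerRatio b c n * y ^ n := by
  refine summable_mul_pow_of_tendsto_norm_div_norm (eventually_gt_atTop 0 |>.mono fun n hn =>
    mul_ne_zero (Nat.cast_ne_zero.2 hn.ne') (pochhammerRatio_pos hb hc n).ne') ?_ hy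
  have hlim : Tendsto (fun n : ℕ => ((1 : ℝ) + n) / (0 + n)) atTop (𝓝 1) := by
    simpa using tendsto_add_mul_div_add_mul_atTop_nhds (1 : ℝ) 0 1 one_ne_zero
  rw [← one_mul (1 : ℝ)]
  refine (hlim.mul (tendsto_norm_pochhammerRatio_succ_div hb hc)).congr' ?_
  filter_upwards [eventually_gt_atTop 0] with n hn
  rw [norm_mul, norm_mul, mul_div_mul_comm, Real.norm_natCast, Real.norm_natCast]
  push_cast
  rw [add_comm, zero_add]

theorem hasDerivAt_gaussHypergeom_one {b c t : ℝ} (hb : 0 < b) (hc : 0 < c) (ht : |t| < 1) :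
    HasDerivAt (gaussHypergeom 1 b c) (∑' n, pochhammerRatio b c n * (n * t ^ (n - 1))) t := by
  obtain ⟨r, htr, hr1⟩ := exists_between ht
  have hr : |r| < 1 := by rwa [abs_of_pos ((abs_nonneg t).trans_lt htr)]
  rw [gaussHypergeom_one_eq_tsum]
  refine hasDerivAt_tsum_mul_pow ((summable_natCast_mul_pochhammerRatio_mul_pow hb hc hr).congr
    fun n => ?_) htr
  rw [Real.norm_of_nonneg (pochhammerRatio_pos hb hc n).le]

theorem gaussHypergeom_one_ode {b c t : ℝ} (hb : 0 < b) (hc : 0 < c) (ht : |t| < 1) :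
    t * (1 - t) * deriv (gaussHypergeom 1 b c) t + ((c - 1) - b * t) * gaussHypergeom 1 b c t =
      c - 1 := by
  set A := pochhammerRatio b c
  set F := ∑' n, A n * t ^ n
  set E := ∑' n : ℕ, n * A n * t ^ n
  have hF : HasSum (fun n => A n * t ^ n) F := (summable_pochhammerRatio_mul_pow hb hc ht).hasSum
  have hE : HasSum (fun n : ℕ => n * A n * t ^ n) E :=
    (summable_natCast_mul_pochhammerRatio_mul_pow hb hc ht).hasSum
  have hderiv : t * deriv (gaussHypergeom 1 b c) t = E := by
    rw [(hasDerivAt_gaussHypergeom_one hb hc ht).deriv, ← tsum_mul_left]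
    refine tsum_congr fun n => ?_
    rcases n with _ | n
    · simp
    · rw [Nat.add_sub_cancel, pow_succ]
      ring
  have hsum : HasSum (fun n : ℕ => (n + c - 1) * A n * t ^ n) (E + (c - 1) * F) :=
    (hE.add (hF.mul_left (c - 1))).congr_fun fun n => by ring
  -- the recurrence turns the tail of this series into `t * (E + b * F)`
  have hshift : HasSum (fun n : ℕ => ((n + 1 : ℕ) + c - 1) * A (n + 1) * t ^ (n + 1))
      (t * (E + b * F)) := by
    refine ((hE.add (hF.mul_left b)).mul_left t).congr_fun fun n => ?_
    have hcn : c + n ≠ 0 := (add_pos_of_pos_of_nonneg hc n.cast_nonneg).ne'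
    rw [show A (n + 1) = _ from pochhammerRatio_succ b c n]
    push_cast
    field_simp
    ring
  have hE_eq : E + (c - 1) * F - (c - 1) = t * (E + b * F) := by
    simpa [A, pochhammerRatio_zero] using ((hasSum_nat_add_iff' 1).2 hsum).unique hshift
  rw [congrFun (gaussHypergeom_one_eq_tsum b c) t]
  linear_combination (1 - t) * hderiv + hE_eq

/-- For `c > 1`, `b - c + 1 > 0` and `0 < x < 1`,
`₂F₁(1,b;c;x) = (c-1)(1-x)^(c-b-1) x^(1-c) B(c-1, b-c+1, x)`. -/
theorem gaussHypergeom_one_eq_incompleteBeta (b c x : ℝ) (hc : 1 < c) (hbc : 0 < b - c + 1)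
    (hx0 : 0 < x) (hx1 : x < 1) :
    gaussHypergeom 1 b c x =
      (c - 1) * (1 - x) ^ (c - b - 1) * x ^ (1 - c) *
        ∫ t in (0:ℝ)..x, t ^ ((c - 1) - 1) * (1 - t) ^ ((b - c + 1) - 1) := by
  have hb : 0 < b := by linarith
  have hc0 : 0 < c := by linarith
  have habs : ∀ t ∈ Icc 0 x, |t| < 1 := fun t ht =>
    abs_lt.2 ⟨by linarith [ht.1], by linarith [ht.2]⟩
  have hintegral := mul_integral_rpow_mul_one_sub_rpow_of_ode (sub_pos.2 hc) hx0.le hx1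
    (fun t ht => (hasDerivAt_gaussHypergeom_one hb hc0 (habs t ht)).differentiableAt)
    (fun t ht => by
      rw [show c - 1 + (b - c + 1) = b by ring]
      exact gaussHypergeom_one_ode hb hc0 (habs t (Ioo_subset_Icc_self ht)))
  have hx : x ^ (1 - c) * x ^ (c - 1) = 1 := by
    rw [← Real.rpow_add hx0, show 1 - c + (c - 1) = 0 by ring, Real.rpow_zero]
  have h1x : (1 - x) ^ (c - b - 1) * (1 - x) ^ (b - c + 1) = 1 := by
    rw [← Real.rpow_add (by linarith), show c - b - 1 + (b - c + 1) = 0 by ring, Real.rpow_zero]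
  linear_combination (-((1 - x) ^ (c - b - 1) * x ^ (1 - c))) * hintegral -
    gaussHypergeom 1 b c x * (1 - x) ^ (c - b - 1) * (1 - x) ^ (b - c + 1) * hx -
    gaussHypergeom 1 b c x * h1x
end

section
/- For an integer n ≥ 2 and 0 < x < 1, we have ₂F₁(1, n - 1/2; 3/2; x) = (1/(2(1-x)^{n-1})) · Σ_{j=0}^{n-2} C(n-2, j) (-x)^j / (j + 1/2). -/
/-!
Write `n = m + 2`. Since `(c)_m (c + m)_k = (c)_{m+k} = (c)_k (c + k)_m`, the `k`-th term of
`₂F₁(1, c + m; c; x)` is `(k + c)_m xᵏ / (c)_m`, so everything reduces to the series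
`S_m = ∑ₖ (k + c)_m xᵏ`. Writing `(k + c)_{m+1}` once as `(k + c)_m (k + c + m)` and once as
`(k + c) (k + c + 1)_m` and shifting the index gives
`(1 - x) S_{m+1} = (m + 1) S_m + (c - 1) (c)_m`.
The claimed closed form satisfies the same recursion, by the binomial theorem for `(1 - x)^{m+1}`
and `(m + 1) C(m, j) = (m + 1 - j) C(m + 1, j)`. Finally take `c = 3/2`.
-/

open Finset

open Polynomial

theorem Polynomial.summable_eval_mul_geometric {R : Type*} [NormedRing R] [CompleteSpace R]
    (p : R[X]) {x : R} (hx : ‖x‖ < 1) :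
    Summable fun k : ℕ => p.eval (k : R) * x ^ k := by
  have h : ∀ i ∈ range (p.natDegree + 1),
      Summable fun k : ℕ => p.coeff i * ((k : R) ^ i * x ^ k) :=
    fun i _ => (summable_pow_mul_geometric_of_norm_lt_one i hx).mul_left _
  refine (summable_sum h).congr fun k => ?_
  rw [eval_eq_sum_range, Finset.sum_mul]
  exact Finset.sum_congr rfl fun i _ => (mul_assoc _ _ _).symm

theorem summable_ascPochhammer_eval_add_mul_geometric (m : ℕ) (c : ℝ) {x : ℝ} (hx : |x| < 1) :
    Summable fun k : ℕ => (ascPochhammer ℝ m).eval (k + c) * x ^ k := by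
  refine (((ascPochhammer ℝ m).comp (X + C c)).summable_eval_mul_geometric
    (by rwa [Real.norm_eq_abs])).congr fun k => ?_
  rw [eval_comp, eval_add, eval_X, eval_C]

theorem one_sub_mul_tsum_ascPochhammer_succ (m : ℕ) (c : ℝ) {x : ℝ} (hx : |x| < 1) :
    (1 - x) * ∑' k : ℕ, (ascPochhammer ℝ (m + 1)).eval (k + c) * x ^ k =
      (m + 1) * ∑' k : ℕ, (ascPochhammer ℝ m).eval (k + c) * x ^ k +
        (c - 1) * (ascPochhammer ℝ m).eval c := by
  set f : ℕ → ℕ → ℝ := fun m k => (ascPochhammer ℝ m).eval (k + c) * x ^ k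
  set g : ℕ → ℝ := fun k => (k + c - 1) * f m k
  have hf : Summable (f m) := summable_ascPochhammer_eval_add_mul_geometric m c hx
  have hg : Summable g := by
    refine ((X + C (c - 1)) * (ascPochhammer ℝ m).comp (X + C c)).summable_eval_mul_geometric
      (by rwa [Real.norm_eq_abs]) |>.congr fun k => ?_
    simp only [g, f, eval_mul, eval_comp, eval_add, eval_X, eval_C]
    ring
  have hsplit : ∀ k, f (m + 1) k = g k + (m + 1) * f m k := fun k => by
    simp only [g, f, ascPochhammer_succ_eval]
    ring
  have hshift : ∀ k, x * f (m + 1) k = g (k + 1) := fun k => by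
    simp only [g, f, ascPochhammer_succ_left, eval_mul, eval_comp, eval_add, eval_X, eval_one,
      Nat.cast_succ, add_right_comm _ c 1]
    ring
  have hsum : ∑' k, f (m + 1) k = ∑' k, g k + (m + 1) * ∑' k, f m k := by
    rw [tsum_congr hsplit, hg.tsum_add (hf.mul_left _), tsum_mul_left]
  have hsum_shift : x * ∑' k, f (m + 1) k = ∑' k, g k - (c - 1) * (ascPochhammer ℝ m).eval c := by
    rw [← tsum_mul_left, tsum_congr hshift, hg.tsum_eq_zero_add]
    simp [g, f]
  linear_combination hsum - hsum_shift

theorem Nat.cast_choose_mul_succ_eq {R : Type*} [Ring R] (m j : ℕ) (hj : j ≤ m + 1) :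
    (m.choose j : R) * (m + 1) = (m + 1).choose j * (m + 1 - j) := by
  have h := congrArg (Nat.cast (R := R)) (Nat.choose_mul_succ_eq m j)
  push_cast [Nat.cast_sub hj] at h
  exact h

theorem sum_choose_succ_neg_pow_div {K : Type*} [Field K] (m : ℕ) {c : K}
    (hc : ∀ j : ℕ, (j : K) + c - 1 ≠ 0) (x : K) :
    (c + m) * ∑ j ∈ range (m + 2), ((m + 1).choose j : K) * (-x) ^ j / (j + c - 1) =
      (m + 1) * ∑ j ∈ range (m + 1), (m.choose j : K) * (-x) ^ j / (j + c - 1) +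
        (1 - x) ^ (m + 1) := by
  have hbinom : (1 - x) ^ (m + 1) = ∑ j ∈ range (m + 2), ((m + 1).choose j : K) * (-x) ^ j := by
    rw [sub_eq_neg_add, add_pow]
    exact sum_congr rfl fun j _ => by rw [one_pow, mul_one, mul_comm]
  have hextend : ∑ j ∈ range (m + 1), (m.choose j : K) * (-x) ^ j / (j + c - 1) =
      ∑ j ∈ range (m + 2), (m.choose j : K) * (-x) ^ j / (j + c - 1) := by
    rw [sum_range_succ _ (m + 1), Nat.choose_succ_self, Nat.cast_zero, zero_mul, zero_div,
      add_zero]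
  rw [hbinom, hextend, mul_sum, mul_sum, ← sum_add_distrib]
  refine sum_congr rfl fun j hj => ?_
  have hchoose := Nat.cast_choose_mul_succ_eq (R := K) m j (Nat.lt_succ_iff.mp (mem_range.mp hj))
  field_simp [hc j]
  linear_combination -(-x) ^ j * hchoose

theorem tsum_ascPochhammer_eval_add_mul_geometric (m : ℕ) {c : ℝ}
    (hc : ∀ j : ℕ, (j : ℝ) + c - 1 ≠ 0) {x : ℝ} (hx : |x| < 1) :
    ∑' k : ℕ, (ascPochhammer ℝ m).eval (k + c) * x ^ k =
      (c - 1) * (ascPochhammer ℝ m).eval c *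
        (∑ j ∈ range (m + 1), (m.choose j : ℝ) * (-x) ^ j / (j + c - 1)) / (1 - x) ^ (m + 1) := by
  have h1x : 1 - x ≠ 0 := by linarith [(abs_lt.mp hx).2]
  induction m with
  | zero =>
    simp only [ascPochhammer_zero, eval_one, one_mul, tsum_geometric_of_abs_lt_one hx]
    simp only [zero_add, sum_range_one, Nat.choose_self, Nat.cast_one, pow_zero, Nat.cast_zero,
      pow_one]
    have hc0 : c - 1 ≠ 0 := by simpa using hc 0
    field_simp
  | succ m ih =>
    rw [eq_div_iff (pow_ne_zero _ h1x)]
    calc (∑' k : ℕ, (ascPochhammer ℝ (m + 1)).eval (k + c) * x ^ k) * (1 - x) ^ (m + 1 + 1)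
        = ((1 - x) * ∑' k : ℕ, (ascPochhammer ℝ (m + 1)).eval (k + c) * x ^ k) *
            (1 - x) ^ (m + 1) := by ring
      _ = (m + 1) * ((c - 1) * (ascPochhammer ℝ m).eval c *
            ∑ j ∈ range (m + 1), (m.choose j : ℝ) * (-x) ^ j / (j + c - 1)) +
            (c - 1) * (ascPochhammer ℝ m).eval c * (1 - x) ^ (m + 1) := by
        rw [one_sub_mul_tsum_ascPochhammer_succ m c hx, ih, add_mul, mul_assoc (_ + 1),
          div_mul_cancel₀ _ (pow_ne_zero _ h1x)]
      _ = _ := by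
        rw [ascPochhammer_succ_eval]
        linear_combination
          -(c - 1) * (ascPochhammer ℝ m).eval c * sum_choose_succ_neg_pow_div m hc x

theorem ascPochhammer_eval_mul_eval_add_comm {S : Type*} [CommSemiring S] (c : S) (m k : ℕ) :
    (ascPochhammer S m).eval c * (ascPochhammer S k).eval (c + m) =
      (ascPochhammer S k).eval c * (ascPochhammer S m).eval (c + k) := by
  have h := fun a b : ℕ => congrArg (eval c) (ascPochhammer_mul (S := S) a b)
  simp only [eval_mul, eval_comp, eval_add, eval_X, eval_natCast] at h
  rw [h, h, add_comm]

theorem gaussHypergeom_one_add_nat (m : ℕ) {c : ℝ} (hc : ∀ j : ℕ, (j : ℝ) + c - 1 ≠ 0) {x : ℝ}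
    (hx : |x| < 1) :
    gaussHypergeom 1 (c + m) c x =
      (c - 1) * (∑ j ∈ range (m + 1), (m.choose j : ℝ) * (-x) ^ j / (j + c - 1)) /
        (1 - x) ^ (m + 1) := by
  have hpoch : ∀ k, (ascPochhammer ℝ k).eval c ≠ 0 := fun k => by
    rw [Ne, ascPochhammer_eval_eq_zero_iff]
    rintro ⟨j, -, hj⟩
    exact hc (j + 1) (by push_cast; linarith)
  have hterm : ∀ k : ℕ, (ascPochhammer ℝ k).eval 1 * (ascPochhammer ℝ k).eval (c + m) /
      (ascPochhammer ℝ k).eval c * x ^ k / (Nat.factorial k) =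
        (ascPochhammer ℝ m).eval (k + c) * x ^ k / (ascPochhammer ℝ m).eval c := fun k => by
    have hratio : (ascPochhammer ℝ k).eval (c + m) / (ascPochhammer ℝ k).eval c =
        (ascPochhammer ℝ m).eval (c + k) / (ascPochhammer ℝ m).eval c := by
      rw [div_eq_div_iff (hpoch k) (hpoch m)]
      linear_combination ascPochhammer_eval_mul_eval_add_comm c m k
    rw [ascPochhammer_eval_one, mul_div_assoc _ (eval (c + m) _), hratio, add_comm (k : ℝ)]
    field_simp [Nat.factorial_ne_zero]
  rw [gaussHypergeom, tsum_congr hterm, tsum_div_const,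
    tsum_ascPochhammer_eval_add_mul_geometric m hc hx]
  field_simp [hpoch m]

/-- For `n ≥ 2` and `0 < x < 1`,
`₂F₁(1, n-1/2; 3/2; x) = (1/(2(1-x)^(n-1))) ∑_{j=0}^{n-2} C(n-2,j)(-x)^j/(j+1/2)`. -/
theorem gaussHypergeom_three_halves (n : ℕ) (hn : 2 ≤ n) (x : ℝ) (hx0 : 0 < x) (hx1 : x < 1) :
    gaussHypergeom 1 ((n : ℝ) - 1/2) (3/2) x =
      1 / (2 * (1 - x) ^ (n - 1)) *
        ∑ j ∈ range (n - 1), (n - 2).choose j * (-x) ^ j / ((j : ℝ) + 1/2) := by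
  obtain ⟨m, rfl⟩ : ∃ m, n = m + 2 := ⟨n - 2, by omega⟩
  have hc : ∀ j : ℕ, (j : ℝ) + 3 / 2 - 1 ≠ 0 := fun j => by linarith [j.cast_nonneg (α := ℝ)]
  have hx : |x| < 1 := abs_lt.mpr ⟨by linarith, hx1⟩
  have hb : ((m + 2 : ℕ) : ℝ) - 1 / 2 = 3 / 2 + m := by push_cast; ring
  rw [hb, gaussHypergeom_one_add_nat m hc hx, Nat.add_sub_cancel, Nat.add_succ_sub_one]
  simp only [add_sub_assoc, show (3 : ℝ) / 2 - 1 = 1 / 2 by norm_num]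
  field_simp
end

section
/- For a positive integer k, setting n = 2k, and 0 < x < 1, we have ₂F₁(1, n - 1/2; (n+1)/2; x) = ((n-1)/(2(1-x)^k)) · Σ_{j=0}^{k-1} C(k-1, j) (-x)^j / (j + k - 1/2). -/
/-!
Put `k = K + 1` and `β = K + 1/2`. The series is `₂F₁(1, K+1+β; 1+β; x) = ∑ cₘ xᵐ` with
`cₘ = (K+1+β)ₘ / (1+β)ₘ`, the unique sequence with `c₀ = 1` and `(1+β+m) cₘ₊₁ = (K+1+β+m) cₘ`.
The right-hand side is `β V(x) W(x)` with `V = ∑ⱼ C(K,j) (-x)ʲ / (j+β)` and `W = (1-x)^-(K+1)`,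
and as formal power series `X V' + β V = (1-X)^K` and `(1-X) W' = (K+1) W`. Hence `B = V W`
satisfies `(1-X) X B' + β B = 1 + (K+1+β) X B`, which says exactly that `β B` has the
coefficients `cₘ`. Evaluating at `x` is then a Cauchy product of a polynomial with the binomial
series.
-/

open Finset

open PowerSeries

theorem PowerSeries.coeff_one_sub_X_pow {R : Type*} [CommRing R] (K n : ℕ) :
    coeff n ((1 - X : R⟦X⟧) ^ K) = (-1) ^ n * K.choose n := by
  have : (1 - X : R⟦X⟧) ^ K =
      rescale (-1 : R) (((1 + Polynomial.X) ^ K : Polynomial R) : R⟦X⟧) := by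
    simp [sub_eq_add_neg]
  rw [this, coeff_rescale, Polynomial.coeff_coe, Polynomial.coeff_one_add_X_pow]

theorem PowerSeries.coeff_invOneSubPow_succ {R : Type*} [CommRing R] (K n : ℕ) :
    coeff n (invOneSubPow R (K + 1) : R⟦X⟧) = (n + K).choose K := by
  rw [invOneSubPow_val_succ_eq_mk_add_choose, coeff_mk, add_comm]

theorem PowerSeries.coeff_X_mul_derivative {R : Type*} [CommSemiring R] (f : R⟦X⟧) (n : ℕ) :
    coeff n (X * d⁄dX R f) = n * coeff n f := by
  cases n with
  | zero => simp
  | succ n => rw [coeff_succ_X_mul, coeff_derivative, mul_comm]; push_cast; rfl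

theorem PowerSeries.one_sub_X_mul_derivative_invOneSubPow {R : Type*} [CommRing R] (K : ℕ) :
    (1 - X) * d⁄dX R (invOneSubPow R (K + 1) : R⟦X⟧) =
      (K + 1 : R⟦X⟧) * (invOneSubPow R (K + 1) : R⟦X⟧) := by
  set W : R⟦X⟧ := (invOneSubPow R (K + 1) : R⟦X⟧)
  have hW : W * (1 - X) ^ (K + 1) = 1 := (invOneSubPow R (K + 1)).val_inv
  have hD : d⁄dX R W * (1 - X) ^ (K + 1) = (K + 1 : R⟦X⟧) * W * (1 - X) ^ K := by
    have := congrArg (d⁄dX R) hW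
    rw [Derivation.leibniz, derivative_pow, map_sub, derivative_one, derivative_X,
      add_tsub_cancel_right] at this
    simp only [smul_eq_mul, Nat.cast_add, Nat.cast_one] at this
    linear_combination this
  linear_combination W * (1 - X) * hD - ((1 - X) * d⁄dX R W - (K + 1 : R⟦X⟧) * W) * hW

theorem ascPochhammer_eval_mul_eq_of_succ {S : Type*} [CommSemiring S] {a c : S} {u : ℕ → S}
    (h0 : u 0 = 1) (hsucc : ∀ n : ℕ, (c + n) * u (n + 1) = (a + n) * u n) (n : ℕ) :
    (ascPochhammer S n).eval c * u n = (ascPochhammer S n).eval a := by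
  induction n with
  | zero => simp [h0]
  | succ n ih =>
    rw [ascPochhammer_succ_eval, ascPochhammer_succ_eval, mul_assoc, hsucc, ← ih]
    ring

theorem tsum_coeff_mul_mul_pow {R : Type*} [NormedCommRing R] [CompleteSpace R] {f g : R⟦X⟧}
    {x : R} (hf : Summable fun n ↦ ‖coeff n f * x ^ n‖)
    (hg : Summable fun n ↦ ‖coeff n g * x ^ n‖) :
    ∑' n, coeff n (f * g) * x ^ n = (∑' n, coeff n f * x ^ n) * ∑' n, coeff n g * x ^ n := by
  rw [tsum_mul_tsum_eq_tsum_sum_antidiagonal_of_summable_norm hf hg]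
  refine tsum_congr fun n ↦ ?_
  rw [coeff_mul, Finset.sum_mul]
  refine Finset.sum_congr rfl fun ij hij ↦ ?_
  rw [← Finset.HasAntidiagonal.mem_antidiagonal.mp hij, pow_add]
  ring

theorem gaussHypergeom_one_left (b c x : ℝ) :
    gaussHypergeom 1 b c x =
      ∑' n : ℕ, (ascPochhammer ℝ n).eval b / (ascPochhammer ℝ n).eval c * x ^ n := by
  refine tsum_congr fun n ↦ ?_
  have : (n.factorial : ℝ) ≠ 0 := by positivity
  rw [ascPochhammer_eval_one]
  field_simp

/-- As a function, `x ↦ ∫₀¹ t^(β-1) (1 - x t)^K dt`. -/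
noncomputable def momentSeries (K : ℕ) (β : ℝ) : ℝ⟦X⟧ :=
  mk fun j ↦ (-1) ^ j * K.choose j / (j + β)

section momentSeries

variable {K : ℕ} {β : ℝ}

theorem coeff_momentSeries_eq_zero_of_lt {n : ℕ} (h : K < n) :
    coeff n (momentSeries K β) = 0 := by
  simp [momentSeries, Nat.choose_eq_zero_of_lt h]

theorem X_mul_derivative_momentSeries_add (hβ : 0 < β) :
    X * d⁄dX ℝ (momentSeries K β) + C β * momentSeries K β = (1 - X) ^ K := by
  ext n
  have : (n : ℝ) + β ≠ 0 := by positivity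
  rw [map_add, coeff_X_mul_derivative, coeff_C_mul, coeff_one_sub_X_pow, momentSeries, coeff_mk]
  field_simp

theorem one_sub_X_mul_X_mul_derivative_momentSeries_mul (hβ : 0 < β) :
    (1 - X) * (X * d⁄dX ℝ (momentSeries K β * (invOneSubPow ℝ (K + 1) : ℝ⟦X⟧))) +
        C β * (momentSeries K β * (invOneSubPow ℝ (K + 1) : ℝ⟦X⟧)) =
      1 + X * (C (K + 1 + β) * (momentSeries K β * (invOneSubPow ℝ (K + 1) : ℝ⟦X⟧))) := by
  set V := momentSeries K β
  set W : ℝ⟦X⟧ := (invOneSubPow ℝ (K + 1) : ℝ⟦X⟧)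
  have hV := X_mul_derivative_momentSeries_add (K := K) hβ
  have hW : W * (1 - X) ^ (K + 1) = 1 := (invOneSubPow ℝ (K + 1)).val_inv
  have hDW := one_sub_X_mul_derivative_invOneSubPow (R := ℝ) K
  rw [Derivation.leibniz, smul_eq_mul, smul_eq_mul, map_add, map_add, map_natCast, map_one]
  linear_combination X * V * hDW + (1 - X) * W * hV + hW

theorem ascPochhammer_eval_mul_coeff_momentSeries_mul (hβ : 0 < β) (n : ℕ) :
    (ascPochhammer ℝ n).eval (1 + β) *
        (β * coeff n (momentSeries K β * (invOneSubPow ℝ (K + 1) : ℝ⟦X⟧))) =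
      (ascPochhammer ℝ n).eval (K + 1 + β) := by
  set B := momentSeries K β * (invOneSubPow ℝ (K + 1) : ℝ⟦X⟧)
  have h : (1 - X) * (X * d⁄dX ℝ B) + C β * B = 1 + X * (C (K + 1 + β) * B) :=
    one_sub_X_mul_X_mul_derivative_momentSeries_mul hβ
  have h0 : β * coeff 0 B = 1 := by
    simpa [coeff_zero_eq_constantCoeff] using congrArg (coeff 0) h
  have hsucc (m : ℕ) :
      (1 + β + m) * (β * coeff (m + 1) B) = (K + 1 + β + m) * (β * coeff m B) := by
    have hm := congrArg (coeff (m + 1)) h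
    rw [sub_mul, one_mul, map_add, map_sub, coeff_X_mul_derivative, coeff_succ_X_mul,
      coeff_X_mul_derivative, coeff_C_mul, map_add, coeff_succ_X_mul, coeff_C_mul, coeff_one,
      if_neg m.succ_ne_zero] at hm
    push_cast at hm
    linear_combination β * hm
  exact ascPochhammer_eval_mul_eq_of_succ (u := fun m ↦ β * coeff m B) h0 hsucc n

theorem summable_norm_coeff_momentSeries_mul_pow (x : ℝ) :
    Summable fun n ↦ ‖coeff n (momentSeries K β) * x ^ n‖ :=
  summable_of_ne_finset_zero (s := range (K + 1)) fun n hn ↦ by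
    rw [coeff_momentSeries_eq_zero_of_lt (by simpa using hn), zero_mul, norm_zero]

theorem tsum_coeff_momentSeries_mul_pow (x : ℝ) :
    ∑' n, coeff n (momentSeries K β) * x ^ n =
      ∑ j ∈ range (K + 1), K.choose j * (-x) ^ j / (j + β) := by
  rw [tsum_eq_sum (s := range (K + 1)) fun n hn ↦ by
    rw [coeff_momentSeries_eq_zero_of_lt (by simpa using hn), zero_mul]]
  refine sum_congr rfl fun j _ ↦ ?_
  rw [momentSeries, coeff_mk, neg_pow x]
  ring

end momentSeries

theorem summable_norm_coeff_invOneSubPow_mul_pow (K : ℕ) {x : ℝ} (hx : |x| < 1) :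
    Summable fun n ↦ ‖coeff n (invOneSubPow ℝ (K + 1) : ℝ⟦X⟧) * x ^ n‖ := by
  simp_rw [coeff_invOneSubPow_succ, norm_mul, norm_pow, Real.norm_natCast]
  exact summable_choose_mul_geometric_of_norm_lt_one K (r := ‖x‖) (by simpa using hx)

theorem tsum_coeff_invOneSubPow_mul_pow (K : ℕ) {x : ℝ} (hx : |x| < 1) :
    ∑' n, coeff n (invOneSubPow ℝ (K + 1) : ℝ⟦X⟧) * x ^ n = 1 / (1 - x) ^ (K + 1) := by
  simp_rw [coeff_invOneSubPow_succ]
  exact tsum_choose_mul_geometric_of_norm_lt_one K hx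

theorem gaussHypergeom_one_nat_add_one_add (K : ℕ) {β x : ℝ} (hβ : 0 < β) (hx : |x| < 1) :
    gaussHypergeom 1 (K + 1 + β) (1 + β) x =
      β / (1 - x) ^ (K + 1) * ∑ j ∈ range (K + 1), K.choose j * (-x) ^ j / (j + β) := by
  have hterm (n : ℕ) :
      (ascPochhammer ℝ n).eval (K + 1 + β) / (ascPochhammer ℝ n).eval (1 + β) * x ^ n =
        β * (coeff n (momentSeries K β * (invOneSubPow ℝ (K + 1) : ℝ⟦X⟧)) * x ^ n) := by
    have : 0 < (ascPochhammer ℝ n).eval (1 + β) := ascPochhammer_pos n _ (by positivity)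
    rw [← ascPochhammer_eval_mul_coeff_momentSeries_mul hβ n]
    field_simp
  rw [gaussHypergeom_one_left, tsum_congr hterm, tsum_mul_left,
    tsum_coeff_mul_mul_pow (summable_norm_coeff_momentSeries_mul_pow x)
      (summable_norm_coeff_invOneSubPow_mul_pow K hx),
    tsum_coeff_momentSeries_mul_pow, tsum_coeff_invOneSubPow_mul_pow K hx]
  ring

/-- For a positive integer `k`, with `n = 2k`, and `0 < x < 1`,
`₂F₁(1, n-1/2; (n+1)/2; x) = ((n-1)/(2(1-x)^k)) ∑_{j=0}^{k-1} C(k-1,j)(-x)^j/(j+k-1/2)`. -/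
theorem gaussHypergeom_even (k n : ℕ) (hk : 0 < k) (hn : n = 2 * k) (x : ℝ)
    (hx0 : 0 < x) (hx1 : x < 1) :
    gaussHypergeom 1 ((n : ℝ) - 1/2) (((n : ℝ) + 1) / 2) x =
      ((n : ℝ) - 1) / (2 * (1 - x) ^ k) *
        ∑ j ∈ range k, (k - 1).choose j * (-x) ^ j / ((j : ℝ) + k - 1/2) := by
  obtain ⟨K, rfl⟩ : ∃ K, k = K + 1 := ⟨k - 1, by omega⟩
  subst hn
  have h := gaussHypergeom_one_nat_add_one_add K (β := K + 1/2) (x := x) (by positivity)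
    (abs_lt.mpr ⟨by linarith, hx1⟩)
  convert h using 2
  · push_cast; ring
  · push_cast; ring
  · push_cast; field_simp; ring
  · refine sum_congr rfl fun j _ ↦ ?_
    push_cast
    ring
end

section
/- Fix d ≥ 1, λ ∈ ℝ, and z with |z| < 1/√d. Define F_{0,d}(λ) = 1 and for n ≥ 1, F_{n,d}(λ) = (√d^n / Γ(n)) [e^{λ²/(2d)} Γ(n, λ²/d) + 2^{n-1} (λ²/(2d))^{n/2} γ(n/2, λ²/(2d))]. Then Σ_{n=0}^∞ F_{n,d}(λ) zⁿ = 1 + (z√d/(1 - z√d)) e^{-λ²(1-2z√d)/(2d)} + (√π/√2) z|λ| e^{z²λ²/2} [erf(z|λ|/√2) + erf((1 - z√d)|λ|/√(2d))]. -/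
/-!
Put `w = z√d`, `r = |λ|/√(2d)` and `c = √2 z|λ|`. Substituting `t = u²` in the lower incomplete
gamma function gives, for `n = m + 1`,
`F_{n,d}(λ) zⁿ = e^{λ²/(2d)} w ∫_{λ²/d}^∞ (wt)^m/m! e^{-t} dt + c ∫_0^r (cu)^m/m! e^{-u²} du`.
Summing over `m` under the integral sign (dominated convergence, with the dominating functions
`e^{|wt|} e^{-t}`, integrable because `|w| < 1`, and `e^{|cu|} e^{-u²}` on a bounded interval)
turns the powers into exponentials: the first series becomes `∫_{λ²/d}^∞ e^{-(1-w)t} dt`, the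
second `∫_0^r e^{cu - u²} du`, which after completing the square is a difference of error
functions.
-/

open MeasureTheory

/-- `F_{n,d}(λ)`: `F_{0,d} = 1` and for `n ≥ 1`,
`F_{n,d}(λ) = (√d^n/Γ(n))[e^{λ²/(2d)} Γ(n, λ²/d) + 2^{n-1}(λ²/(2d))^{n/2} γ(n/2, λ²/(2d))]`,
where `Γ(·,·)` and `γ(·,·)` are the upper and lower incomplete gamma functions. -/
noncomputable def Fnd (d n : ℕ) (l : ℝ) : ℝ :=
  if n = 0 then 1
  else
    Real.sqrt d ^ n / Real.Gamma n *
      (Real.exp (l ^ 2 / (2 * d)) *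
          (∫ t in Set.Ioi (l ^ 2 / (d : ℝ)), t ^ ((n : ℝ) - 1) * Real.exp (-t)) +
        2 ^ (n - 1) * (l ^ 2 / (2 * d)) ^ ((n : ℝ) / 2) *
          (∫ t in (0:ℝ)..(l ^ 2 / (2 * d)), t ^ ((n : ℝ) / 2 - 1) * Real.exp (-t)))

/-- The error function `erf(x) = (2/√π) ∫_0^x e^{-t²} dt`. -/
noncomputable def myErf (x : ℝ) : ℝ := 2 / Real.sqrt Real.pi * ∫ t in (0:ℝ)..x, Real.exp (-t ^ 2)

open Real Set
open scoped Nat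

lemma Real.hasSum_pow_div_factorial (x : ℝ) : HasSum (fun n : ℕ => x ^ n / n !) (exp x) := by
  rw [exp_eq_exp_ℝ]; exact NormedSpace.expSeries_div_hasSum_exp x

lemma hasSum_integral_pow_div_factorial_mul {μ : Measure ℝ} {c : ℝ} {g : ℝ → ℝ}
    (hg : Integrable (fun t => exp |c * t| * g t) μ) :
    HasSum (fun n : ℕ => ∫ t, (c * t) ^ n / n ! * g t ∂μ) (∫ t, exp (c * t) * g t ∂μ) := by
  have hg_meas : AEStronglyMeasurable g μ := by
    refine ((by fun_prop : Continuous fun t => exp (-|c * t|)).aestronglyMeasurable.mul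
      hg.aestronglyMeasurable).congr (ae_of_all _ fun t => ?_)
    rw [Pi.mul_apply, ← mul_assoc, ← exp_add, neg_add_cancel, exp_zero, one_mul]
  have hbound_sum : ∀ t, HasSum (fun n : ℕ => |c * t| ^ n / n ! * ‖g t‖) (exp |c * t| * ‖g t‖) :=
    fun t => (hasSum_pow_div_factorial _).mul_right _
  refine hasSum_integral_of_dominated_convergence (fun n t => |c * t| ^ n / n ! * ‖g t‖)
    (fun n => ((by fun_prop : Continuous fun t => (c * t) ^ n / n !).aestronglyMeasurable.mul
      hg_meas)) (fun n => ae_of_all _ fun t => ?_) (ae_of_all _ fun t => (hbound_sum t).summable)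
    ?_ (ae_of_all _ fun t => (hasSum_pow_div_factorial _).mul_right _)
  · simp
  · simp_rw [fun t => (hbound_sum t).tsum_eq]
    refine hg.norm.congr (ae_of_all _ fun t => ?_)
    simp [abs_of_pos (exp_pos _)]

lemma integral_exp_mul_mul_exp_neg_Ioi {c : ℝ} (hc : c < 1) (b : ℝ) :
    ∫ t in Ioi b, exp (c * t) * exp (-t) = exp (-((1 - c) * b)) / (1 - c) := by
  simp_rw [← exp_add, show ∀ t, c * t + -t = (c - 1) * t from fun t => by ring]
  rw [integral_exp_mul_Ioi (by linarith), neg_div, ← div_neg, neg_sub, ← neg_mul, neg_sub]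

lemma hasSum_integral_Ioi_pow_div_factorial_mul_exp_neg {c : ℝ} (hc : |c| < 1) {b : ℝ}
    (hb : 0 ≤ b) :
    HasSum (fun m : ℕ => ∫ t in Ioi b, (c * t) ^ m / m ! * exp (-t))
      (exp (-((1 - c) * b)) / (1 - c)) := by
  have hint : IntegrableOn (fun t => exp |c * t| * exp (-t)) (Ioi b) := by
    refine (exp_neg_integrableOn_Ioi b (sub_pos.2 hc)).congr_fun (fun t ht => ?_) measurableSet_Ioi
    rw [abs_mul, abs_of_pos (hb.trans_lt ht), ← exp_add]
    ring_nf
  rw [← integral_exp_mul_mul_exp_neg_Ioi ((le_abs_self c).trans_lt hc)]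
  exact hasSum_integral_pow_div_factorial_mul hint

lemma myErf_neg (x : ℝ) : myErf (-x) = -myErf x := by
  have h := intervalIntegral.integral_comp_neg (a := 0) (b := x) fun t => exp (-t ^ 2)
  simp only [neg_sq, neg_zero] at h
  rw [myErf, myErf, intervalIntegral.integral_symm, ← h, mul_neg]

lemma integral_exp_neg_sq_eq_sub_myErf (a b : ℝ) :
    ∫ t in a..b, exp (-t ^ 2) = √π / 2 * (myErf b - myErf a) := by
  have hc : Continuous fun t : ℝ => exp (-t ^ 2) := by fun_prop
  rw [myErf, myErf, ← mul_sub, ← intervalIntegral.integral_interval_sub_left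
    (hc.intervalIntegrable _ _) (hc.intervalIntegrable _ _)]
  field_simp

lemma integral_exp_mul_mul_exp_neg_sq (c a b : ℝ) :
    ∫ u in a..b, exp (c * u) * exp (-u ^ 2) =
      √π / 2 * exp (c ^ 2 / 4) * (myErf (b - c / 2) - myErf (a - c / 2)) := by
  have hsq : ∀ u, exp (c * u) * exp (-u ^ 2) = exp (c ^ 2 / 4) * exp (-(u - c / 2) ^ 2) := by
    intro u; rw [← exp_add, ← exp_add]; ring_nf
  simp_rw [hsq, intervalIntegral.integral_const_mul,
    intervalIntegral.integral_comp_sub_right (fun t => exp (-t ^ 2)),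
    integral_exp_neg_sq_eq_sub_myErf]
  ring

lemma hasSum_integral_Ioc_pow_div_factorial_mul_exp_neg_sq (c : ℝ) {r : ℝ} (hr : 0 ≤ r) :
    HasSum (fun m : ℕ => ∫ u in Ioc 0 r, (c * u) ^ m / m ! * exp (-u ^ 2))
      (√π / 2 * exp (c ^ 2 / 4) * (myErf (r - c / 2) + myErf (c / 2))) := by
  rw [← sub_neg_eq_add, ← myErf_neg, ← zero_sub, ← integral_exp_mul_mul_exp_neg_sq,
    intervalIntegral.integral_of_le hr]
  exact hasSum_integral_pow_div_factorial_mul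
    (by fun_prop : Continuous fun u => exp |c * u| * exp (-u ^ 2)).integrableOn_Ioc

lemma integral_rpow_mul_exp_neg_eq_two_mul_integral_sq {r : ℝ} (hr : 0 ≤ r) (s : ℝ) :
    ∫ t in Ioc 0 (r ^ 2), t ^ (s - 1) * exp (-t) =
      2 * ∫ u in Ioc 0 r, u ^ (2 * s - 1) * exp (-u ^ 2) := by
  have himage : (fun u : ℝ => u ^ 2) '' Ioc 0 r = Ioc 0 (r ^ 2) := by
    rw [ContinuousOn.image_Ioc_of_strictMonoOn hr (by fun_prop)
      ((pow_left_strictMonoOn₀ two_ne_zero).mono Icc_subset_Ici_self)]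
    norm_num
  rw [← himage, integral_image_eq_integral_abs_deriv_smul (f' := fun u => 2 * u)
    measurableSet_Ioc
    (fun u _ => (by simpa using hasDerivAt_pow 2 u : HasDerivAt _ (2 * u) u).hasDerivWithinAt)
    ((pow_left_strictMonoOn₀ two_ne_zero).injOn.mono
      (Ioc_subset_Ioi_self.trans Ioi_subset_Ici_self)),
    ← integral_const_mul]
  refine setIntegral_congr_fun measurableSet_Ioc fun u hu => ?_
  have hu : 0 < u := hu.1
  rw [smul_eq_mul, abs_of_pos (by positivity), ← rpow_natCast, ← rpow_mul hu.le,
    show (2 * s - 1) = 1 + ((2:ℕ) * (s - 1)) by push_cast; ring, rpow_add hu, rpow_one]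
  push_cast
  ring

lemma integral_mul_pow_div_factorial_mul (μ : Measure ℝ) (c : ℝ) (g : ℝ → ℝ) (m : ℕ) :
    ∫ t, (c * t) ^ m / m ! * g t ∂μ = c ^ m / m ! * ∫ t, t ^ m * g t ∂μ := by
  rw [← integral_const_mul]
  congr 1 with t
  ring

lemma Fnd_succ_mul_pow {d : ℕ} (hd : 0 < d) (l z : ℝ) (m : ℕ) :
    Fnd d (m + 1) l * z ^ (m + 1) =
      exp (l ^ 2 / (2 * d)) * (z * √d) *
          (∫ t in Ioi (l ^ 2 / d), (z * √d * t) ^ m / m ! * exp (-t)) +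
        √2 * z * |l| *
          ∫ u in Ioc 0 (|l| / √(2 * d)), (√2 * z * |l| * u) ^ m / m ! * exp (-u ^ 2) := by
  set r := |l| / √(2 * d) with hr_def
  have hd' : (0 : ℝ) < d := by exact_mod_cast hd
  have hr : 0 ≤ r := by positivity
  have hsq : l ^ 2 / (2 * d) = r ^ 2 := by
    rw [hr_def, div_pow, sq_abs, sq_sqrt (by positivity)]
  have hl : √2 * z * |l| = 2 * (z * √d * r) := by
    rw [hr_def, sqrt_mul zero_le_two]
    field_simp
    rw [sq_sqrt zero_le_two]
    ring
  rw [Fnd, if_neg m.succ_ne_zero, Nat.cast_succ, Gamma_nat_eq_factorial,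
    intervalIntegral.integral_of_le (by positivity), hsq,
    integral_rpow_mul_exp_neg_eq_two_mul_integral_sq hr]
  have hpow : (r ^ 2) ^ (((m : ℝ) + 1) / 2) = r ^ (m + 1) := by
    rw [← rpow_natCast r 2, ← rpow_mul hr, ← rpow_natCast]
    push_cast
    ring_nf
  simp_rw [hpow, mul_div_cancel₀ _ (two_ne_zero (α := ℝ)), add_sub_cancel_right, rpow_natCast,
    integral_mul_pow_div_factorial_mul, hl, Nat.add_sub_cancel]
  ring

lemma hasSum_Fnd_succ_mul_pow {d : ℕ} (hd : 0 < d) (l : ℝ) {z : ℝ} (hz : |z| < 1 / √d) :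
    HasSum (fun m : ℕ => Fnd d (m + 1) l * z ^ (m + 1))
      (z * √d / (1 - z * √d) * exp (-l ^ 2 * (1 - 2 * z * √d) / (2 * d)) +
        √π / √2 * z * |l| * exp (z ^ 2 * l ^ 2 / 2) *
          (myErf (z * |l| / √2) + myErf ((1 - z * √d) * |l| / √(2 * d)))) := by
  have hd' : (0 : ℝ) < d := by exact_mod_cast hd
  set w := z * √d with hw_def
  set r := |l| / √(2 * d) with hr_def
  set c := √2 * z * |l| with hc_def
  have hw : |w| < 1 := by
    rwa [abs_mul, abs_of_pos (sqrt_pos.2 hd'), ← lt_div_iff₀ (sqrt_pos.2 hd')]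
  have hs2 : √2 ^ 2 = 2 := sq_sqrt zero_le_two
  have hc2 : c / 2 = z * |l| / √2 := by
    rw [hc_def]; field_simp; linear_combination z * |l| * hs2
  have hrc : r - c / 2 = (1 - w) * |l| / √(2 * d) := by
    rw [hc2, hr_def, hw_def, sqrt_mul zero_le_two]; field_simp
  have hcsq : c ^ 2 / 4 = z ^ 2 * l ^ 2 / 2 := by
    rw [hc_def, mul_pow, mul_pow, hs2, sq_abs]; ring
  have hexp : exp (l ^ 2 / (2 * d)) * exp (-((1 - w) * (l ^ 2 / d))) =
      exp (-l ^ 2 * (1 - 2 * z * √d) / (2 * d)) := by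
    rw [← exp_add]; congr 1; field_simp; ring
  have hcoef : c * (√π / 2) = √π / √2 * z * |l| := by
    rw [hc_def]; field_simp; linear_combination z * |l| * hs2
  rw [← hc2, ← hrc, ← hcsq, ← hexp, ← hcoef]
  have hA := hasSum_integral_Ioi_pow_div_factorial_mul_exp_neg hw (b := l ^ 2 / d) (by positivity)
  have hB := hasSum_integral_Ioc_pow_div_factorial_mul_exp_neg_sq c (r := r) (by positivity)
  have hsucc : HasSum (fun m : ℕ => Fnd d (m + 1) l * z ^ (m + 1)) _ :=
    ((hA.mul_left (exp (l ^ 2 / (2 * d)) * w)).add (hB.mul_left c)).congr_fun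
      (fun m => by rw [Fnd_succ_mul_pow hd l z m])
  convert hsucc using 1
  ring

/-- The generating function of the `F_{n,d}(λ)`. -/
theorem tsum_Fnd (d : ℕ) (hd : 1 ≤ d) (l z : ℝ) (hz : |z| < 1 / Real.sqrt d) :
    ∑' n : ℕ, Fnd d n l * z ^ n =
      1 + z * Real.sqrt d / (1 - z * Real.sqrt d) *
          Real.exp (-l ^ 2 * (1 - 2 * z * Real.sqrt d) / (2 * d)) +
        Real.sqrt Real.pi / Real.sqrt 2 * z * |l| * Real.exp (z ^ 2 * l ^ 2 / 2) *
          (myErf (z * |l| / Real.sqrt 2) +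
            myErf ((1 - z * Real.sqrt d) * |l| / Real.sqrt (2 * d))) := by
  have hsucc := hasSum_Fnd_succ_mul_pow hd l hz
  have hsum : Summable fun n : ℕ => Fnd d n l * z ^ n :=
    (summable_nat_add_iff 1).1 hsucc.summable
  rw [hsum.tsum_eq_zero_add, hsucc.tsum_eq, add_assoc]
  simp [Fnd]
end

section
/- For homogeneous polynomials f, g of degree d in n variables over ℝ, and an orthogonal matrix U ∈ O(n), the Bombieri–Weyl inner product satisfies ⟨f ∘ U⁻¹, g ∘ U⁻¹⟩ = ⟨f, g⟩. -/
open MvPolynomial Finset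

/-- The Bombieri–Weyl inner product on real polynomials in `n` variables:
writing `f = ∑ a_α √(d choose α) X^α`, `g = ∑ b_α √(d choose α) X^α`, it is
`⟨f, g⟩ = ∑_α a_α b_α = ∑_α (coeff α f)(coeff α g)/(d choose α)`. -/
noncomputable def bombieriWeyl {n : ℕ} (f g : MvPolynomial (Fin n) ℝ) : ℝ :=
  ∑ α ∈ f.support ∪ g.support,
    f.coeff α * g.coeff α / (Nat.multinomial α.support α : ℝ)

/-- The substitution `f ∘ U⁻¹` of the linear change of variables given by `U⁻¹`. -/
noncomputable def compMatrix {n : ℕ} (M : Matrix (Fin n) (Fin n) ℝ)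
    (f : MvPolynomial (Fin n) ℝ) : MvPolynomial (Fin n) ℝ :=
  aeval (fun i => ∑ j, C (M i j) * X j) f

/-!
For `f` of degree `d`, the Bombieri–Weyl product is `1/d!` times the Fischer pairing:
the constant term of `f(∂) g`, where `f(∂)` substitutes the (commuting) partial derivatives for
the variables. By the chain rule, `f(∂) (g ∘ M) = ((f ∘ Mᵀ)(∂) g) ∘ M`; for `M Mᵀ = 1` the
pairing of `f ∘ M` with `g ∘ M` is therefore the constant term of `(f(∂) g) ∘ M`, which is the
constant term of `f(∂) g`.
-/

open scoped IsMulCommutative Matrix Nat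

namespace MvPolynomial

variable {σ R : Type*} [CommRing R]

theorem pderiv_pderiv_comm (i j : σ) (p : MvPolynomial σ R) :
    pderiv i (pderiv j p) = pderiv j (pderiv i p) := by
  have h : ⁅pderiv i, pderiv j⁆ = (0 : Derivation R (MvPolynomial σ R) (MvPolynomial σ R)) :=
    derivation_ext fun k => by
      classical
      rw [Derivation.commutator_apply, pderiv_X, pderiv_X]
      simp only [Pi.single_apply]
      split_ifs <;> simp
  simpa [Derivation.commutator_apply, sub_eq_zero] using congr($h p)

theorem pderiv_iterate_monomial (i : σ) (k : ℕ) (β : σ →₀ ℕ) (b : R) :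
    (pderiv i)^[k] (monomial β b) =
      monomial (β - Finsupp.single i k) (b * (β i).descFactorial k) := by
  induction k with
  | zero => simp
  | succ k ih =>
    rw [Function.iterate_succ_apply', ih, pderiv_monomial, tsub_tsub, ← Finsupp.single_add,
      Finsupp.tsub_apply, Finsupp.single_eq_same, Nat.descFactorial_succ, Nat.cast_mul]
    ring_nf

theorem pderiv_aeval [Fintype σ] {τ : Type*} (v : σ → MvPolynomial τ R) (g : MvPolynomial σ R)
    (j : τ) : pderiv j (aeval v g) = ∑ i, pderiv j (v i) * aeval v (pderiv i g) := by
  classical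
  induction g using induction_on with
  | C a => simp
  | add p q hp hq => simp only [map_add, hp, hq, mul_add, Finset.sum_add_distrib]
  | mul_X p i hp =>
    simp only [map_mul, aeval_X, Derivation.leibniz, hp, pderiv_X, smul_eq_mul, map_add,
      mul_add, Finset.sum_add_distrib, Finset.mul_sum]
    congr 1
    · simp [Pi.single_apply, mul_comm]
    · exact Finset.sum_congr rfl fun k _ => by ring

variable (σ R) in
/-- `aeval` needs a commutative target, so `f(∂)` is evaluated in the subalgebra of
`Module.End` generated by the (pairwise commuting) partial derivatives. -/
noncomputable def pderivAlgebra : Subalgebra R (Module.End R (MvPolynomial σ R)) :=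
  Algebra.adjoin R (Set.range fun i => (pderiv i).toLinearMap)

instance : IsMulCommutative (pderivAlgebra σ R) :=
  Algebra.isMulCommutative_adjoin R <| by
    rintro _ ⟨i, rfl⟩ _ ⟨j, rfl⟩
    exact LinearMap.ext (pderiv_pderiv_comm i j)

noncomputable def aevalPDeriv : MvPolynomial σ R →ₐ[R] Module.End R (MvPolynomial σ R) :=
  (pderivAlgebra σ R).val.comp <|
    aeval fun i => ⟨(pderiv i).toLinearMap, Algebra.subset_adjoin ⟨i, rfl⟩⟩

theorem aevalPDeriv_X (i : σ) : aevalPDeriv (X i) = (pderiv i).toLinearMap (R := R) := by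
  simp [aevalPDeriv]

@[simp]
theorem aevalPDeriv_X_apply (i : σ) (p : MvPolynomial σ R) :
    aevalPDeriv (X i) p = pderiv i p := by
  simp [aevalPDeriv]

theorem aevalPDeriv_monomial_monomial (α β : σ →₀ ℕ) (a b : R) :
    aevalPDeriv (monomial α a) (monomial β b) =
      monomial (β - α) (a * b * α.prod fun i k => ((β i).descFactorial k : R)) := by
  induction α using Finsupp.induction generalizing a with
  | zero => simp [smul_monomial]
  | single_add i m α hi hm ih =>
    have hdisj : Disjoint (Finsupp.single i m).support α.support := by
      simpa [Finsupp.support_single, hm] using hi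
    rw [monomial_single_add, map_mul, map_pow, Module.End.mul_apply, ih, aevalPDeriv_X,
      Module.End.pow_apply, Derivation.coeFn_coe, pderiv_iterate_monomial, Finsupp.tsub_apply,
      Finsupp.notMem_support_iff.mp hi, tsub_zero, tsub_tsub, add_comm α,
      Finsupp.prod_add_index_of_disjoint hdisj, Finsupp.prod_single_index (by simp)]
    congr 1
    ring

theorem constantCoeff_aevalPDeriv_monomial (α : σ →₀ ℕ) (a : R) (g : MvPolynomial σ R) :
    constantCoeff (aevalPDeriv (monomial α a) g) = a * coeff α g * α.prod fun _ k => (k ! : R) := by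
  classical
  induction g using induction_on' with
  | monomial β b =>
    rw [aevalPDeriv_monomial_monomial, constantCoeff_monomial, coeff_monomial]
    obtain rfl | hne := eq_or_ne β α
    · simp only [tsub_self, ↓reduceIte]
      congr 1
      exact Finsupp.prod_congr fun i _ => by rw [Nat.descFactorial_self]
    · rw [if_neg hne, mul_zero, zero_mul, ite_eq_right_iff]
      intro hβα
      obtain ⟨i, hi⟩ : ∃ i, β i < α i := by
        by_contra! h
        exact hne (le_antisymm (tsub_eq_zero_iff_le.mp hβα) h)
      rw [Finsupp.prod, Finset.prod_eq_zero (i := i) (Finsupp.mem_support_iff.mpr (by omega))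
        (by simp [Nat.descFactorial_eq_zero_iff_lt.mpr hi]), mul_zero]
  | add p q hp hq => simp only [map_add, hp, hq, coeff_add]; ring

noncomputable def fischer (f g : MvPolynomial σ R) : R :=
  constantCoeff (aevalPDeriv f g)

theorem fischer_eq_sum (f g : MvPolynomial σ R) :
    fischer f g = ∑ α ∈ f.support, coeff α f * coeff α g * α.prod fun _ k => (k ! : R) := by
  conv_lhs => rw [fischer, f.as_sum]
  simp only [map_sum, LinearMap.sum_apply, constantCoeff_aevalPDeriv_monomial]

end MvPolynomial

theorem pderiv_compMatrix {n : ℕ} (M : Matrix (Fin n) (Fin n) ℝ) (j : Fin n)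
    (g : MvPolynomial (Fin n) ℝ) :
    pderiv j (compMatrix M g) = compMatrix M (∑ i, M i j • pderiv i g) := by
  rw [compMatrix, pderiv_aeval, compMatrix, map_sum]
  refine Finset.sum_congr rfl fun i _ => ?_
  simp [pderiv_X, Pi.single_apply, smul_eq_C_mul]

theorem aevalPDeriv_compMatrix {n : ℕ} (M : Matrix (Fin n) (Fin n) ℝ)
    (f g : MvPolynomial (Fin n) ℝ) :
    aevalPDeriv f (compMatrix M g) = compMatrix M (aevalPDeriv (compMatrix Mᵀ f) g) := by
  induction f using induction_on generalizing g with
  | C a => simp [compMatrix]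
  | add p q hp hq => simp only [compMatrix, map_add, LinearMap.add_apply] at hp hq ⊢; rw [hp, hq]
  | mul_X p j hp =>
    have hXj : aevalPDeriv (compMatrix Mᵀ (X j)) g = ∑ i, M i j • pderiv i g := by
      simp [compMatrix, Module.algebraMap_end_apply]
    calc aevalPDeriv (p * X j) (compMatrix M g)
        = aevalPDeriv p (pderiv j (compMatrix M g)) := by simp
      _ = compMatrix M (aevalPDeriv (compMatrix Mᵀ p) (∑ i, M i j • pderiv i g)) := by
        rw [pderiv_compMatrix, hp]
      _ = compMatrix M (aevalPDeriv (compMatrix Mᵀ (p * X j)) g) := by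
        rw [← hXj]
        simp only [compMatrix, map_mul, Module.End.mul_apply]

theorem constantCoeff_compMatrix {n : ℕ} (M : Matrix (Fin n) (Fin n) ℝ)
    (f : MvPolynomial (Fin n) ℝ) : constantCoeff (compMatrix M f) = constantCoeff f := by
  induction f using induction_on with
  | C a => simp [compMatrix]
  | add p q hp hq => simp only [compMatrix, map_add] at hp hq ⊢; rw [hp, hq]
  | mul_X p i => simp [compMatrix]

theorem compMatrix_compMatrix {n : ℕ} (M N : Matrix (Fin n) (Fin n) ℝ)
    (f : MvPolynomial (Fin n) ℝ) : compMatrix N (compMatrix M f) = compMatrix (M * N) f := by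
  simp only [compMatrix, aeval_eq_bind₁, bind₁_bind₁]
  congr 2
  funext i
  simp only [map_sum, map_mul, bind₁_C_right, bind₁_X_right, Finset.mul_sum, Matrix.mul_apply,
    Finset.sum_mul, mul_assoc]
  exact Finset.sum_comm

theorem compMatrix_one {n : ℕ} (f : MvPolynomial (Fin n) ℝ) : compMatrix 1 f = f := by
  simp [compMatrix, Matrix.one_apply]

theorem fischer_compMatrix {n : ℕ} {M : Matrix (Fin n) (Fin n) ℝ} (hM : M * Mᵀ = 1)
    (f g : MvPolynomial (Fin n) ℝ) : fischer (compMatrix M f) (compMatrix M g) = fischer f g := by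
  rw [fischer, aevalPDeriv_compMatrix, constantCoeff_compMatrix, compMatrix_compMatrix, hM,
    compMatrix_one, fischer]

theorem MvPolynomial.IsHomogeneous.compMatrix {n d : ℕ} {f : MvPolynomial (Fin n) ℝ}
    (hf : f.IsHomogeneous d) (M : Matrix (Fin n) (Fin n) ℝ) :
    (_root_.compMatrix M f).IsHomogeneous d := by
  have hlin (i : Fin n) : (∑ j, C (M i j) * X j : MvPolynomial (Fin n) ℝ).IsHomogeneous 1 :=
    IsHomogeneous.sum _ _ _ fun j _ => (isHomogeneous_X ℝ j).C_mul (M i j)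
  have := hf.aeval _ hlin
  rwa [one_mul] at this

theorem factorial_mul_bombieriWeyl {n d : ℕ} {f g : MvPolynomial (Fin n) ℝ}
    (hf : f.IsHomogeneous d) :
    (d ! : ℝ) * bombieriWeyl f g = fischer f g := by
  rw [fischer_eq_sum, bombieriWeyl, Finset.mul_sum,
    ← Finset.sum_subset Finset.subset_union_left fun α _ hα => by simp [notMem_support_iff.mp hα]]
  refine Finset.sum_congr rfl fun α hα => ?_
  have hmult : (Nat.multinomial α.support α : ℝ) ≠ 0 := by
    exact_mod_cast (Nat.multinomial_pos _ _).ne'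
  have hdeg : α.degree = d := by
    rw [Finsupp.degree_eq_weight_one]
    exact hf (mem_support_iff.mp hα)
  rw [← hdeg, Finsupp.degree_apply, ← Nat.multinomial_spec, Finsupp.prod]
  push_cast
  field_simp

theorem bombieriWeyl_invariant_general {n d : ℕ} (f g : MvPolynomial (Fin n) ℝ)
    (hf : f.IsHomogeneous d)
    (U : Matrix (Fin n) (Fin n) ℝ) (hU : U ∈ Matrix.orthogonalGroup (Fin n) ℝ) :
    bombieriWeyl (compMatrix U⁻¹ f) (compMatrix U⁻¹ g) = bombieriWeyl f g := by
  have hUU : Uᵀ * U = 1 := (Matrix.mem_orthogonalGroup_iff' _ _).mp hU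
  have hM : U⁻¹ * (U⁻¹)ᵀ = 1 := by
    rw [Matrix.inv_eq_left_inv hUU, Matrix.transpose_transpose, hUU]
  refine mul_left_cancel₀ (by positivity : (d ! : ℝ) ≠ 0) ?_
  rw [factorial_mul_bombieriWeyl (hf.compMatrix _),
    factorial_mul_bombieriWeyl hf, fischer_compMatrix hM]

/-- For homogeneous `f, g` of degree `d` and `U` orthogonal,
`⟨f ∘ U⁻¹, g ∘ U⁻¹⟩ = ⟨f, g⟩` for the Bombieri–Weyl inner product. -/
theorem bombieriWeyl_invariant {n d : ℕ} (f g : MvPolynomial (Fin n) ℝ)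
    (hf : f.IsHomogeneous d) (hg : g.IsHomogeneous d)
    (U : Matrix (Fin n) (Fin n) ℝ) (hU : U ∈ Matrix.orthogonalGroup (Fin n) ℝ) :
    bombieriWeyl (compMatrix U⁻¹ f) (compMatrix U⁻¹ g) = bombieriWeyl f g :=
  bombieriWeyl_invariant_general f g hf U hU
end
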